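/- Let k ≥ 2 and n − k ≥ 2, and let Δ be the matroid polytope of a matroid of rank k on [n] with dim Δ = n − 1. If v is a simple vertex of Δ, then there exists a vertex of Δ joined to v by an edge of Δ that is not a simple vertex of Δ. -/

import Mathlib

/-!
The edges of a matroid polytope at the vertex `δ_B` are the segments to `δ_(B - b + c)` for the
exchange pairs `(b, c)` of `B`, and by symmetric basis exchange every `δ_D - δ_B` is a sum of the
edge directions `e_c - e_b`. At a simple vertex of a polytope of dimension `n - 1` these `n - 1`
directions are therefore linearly independent and span the hyperplane `∑ xᵢ = 0`: the exchange
pairs form a spanning tree of the complete bipartite graph between `B` and its complement. As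
both sides have at least two elements, this tree has an edge `(b, c)` whose endpoints are not
leaves, say `(b', c)` and `(b, c')` are exchange pairs too. Swapping `b` and `c` maps the exchange
pairs of `B` injectively into those of `A = B - b + c`, and `(b', c')` is one more exchange pair of
`A` (the tree has no 4-cycle). So `δ_A` lies on at least `n` edges and is not simple.
-/

open Finset Module

/-- The 0-1 indicator vector `δ_B ∈ ℝ^S` of a finite subset `B` of `S`. -/
def delta {S : Type} [DecidableEq S] (B : Finset S) : S → ℝ := fun i => if i ∈ B then 1 else 0

/-- A matroid of rank `k` on `S`, given by its collection of bases: a nonempty collection of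
`k`-element subsets satisfying the exchange property. -/
def IsMatroid {S : Type} [DecidableEq S] (k : ℕ) (M : Finset (Finset S)) : Prop :=
  M.Nonempty ∧ (∀ I ∈ M, I.card = k) ∧
    ∀ I ∈ M, ∀ J ∈ M, I ≠ J → ∀ i ∈ I \ J, ∃ j ∈ J \ I, insert j (I.erase i) ∈ M

/-- The matroid polytope: the convex hull of the indicator vectors of the members of `M`. -/
def matroidPolytope {S : Type} [DecidableEq S] (M : Finset (Finset S)) : Set (S → ℝ) :=
  convexHull ℝ (delta '' (M : Set (Finset S)))

/-- The hypersimplex `Δ_{S,k}`: the convex hull of all `δ_B` with `|B| = k`. -/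
def hypersimplex (S : Type) [DecidableEq S] (k : ℕ) : Set (S → ℝ) :=
  convexHull ℝ (delta '' {B : Finset S | B.card = k})

/-- `E` is an edge (a one-dimensional face) of the polytope `P`. -/
def IsEdgeOf {S : Type} (P E : Set (S → ℝ)) : Prop :=
  IsExposed ℝ P E ∧ Module.finrank ℝ (affineSpan ℝ E).direction = 1

/-- The dimension of a polytope: the dimension of its affine span. -/
noncomputable def polyDim {S : Type} (P : Set (S → ℝ)) : ℕ :=
  Module.finrank ℝ (affineSpan ℝ P).direction

/-- A polytope `P` of dimension `d` is simple at a vertex `v` if `v` lies on exactly `d` edges. -/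
def IsSimpleAt {S : Type} (P : Set (S → ℝ)) (v : S → ℝ) : Prop :=
  {E : Set (S → ℝ) | IsEdgeOf P E ∧ v ∈ E}.ncard = polyDim P

/-- A polytope is simple if it is simple at every vertex. -/
def IsSimplePolytope {S : Type} (P : Set (S → ℝ)) : Prop :=
  ∀ v ∈ Set.extremePoints ℝ P, IsSimpleAt P v

/-- The hypersimplex `Δ_{J,k}` on the subset `J` of `S`, viewed inside `ℝ^S`:
the convex hull of all `δ_B` with `B ⊆ J`, `|B| = k`. -/
def hypersimplexOn {S : Type} [DecidableEq S] (J : Finset S) (k : ℕ) : Set (S → ℝ) :=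
  convexHull ℝ (delta '' {B : Finset S | B ⊆ J ∧ B.card = k})

section Exchange

variable {S : Type} [DecidableEq S]

def exch (B : Finset S) (b c : S) : Finset S := insert c (B.erase b)

@[simp] lemma mem_exch {B : Finset S} {b c i : S} :
    i ∈ exch B b c ↔ i = c ∨ i ≠ b ∧ i ∈ B := by
  simp [exch]

lemma coe_exch {B : Finset S} {b c : S} (hbc : b ≠ c) :
    (exch B b c : Set S) = insert c ↑B \ {b} := by
  ext i; by_cases i = b <;> aesop

lemma exch_sdiff {B : Finset S} {b c : S} (hc : c ∉ B) : exch B b c \ B = {c} := by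
  ext i; by_cases i = c <;> aesop

lemma sdiff_exch {B : Finset S} {b c : S} (hb : b ∈ B) (hc : c ∉ B) : B \ exch B b c = {b} := by
  ext i; by_cases i = b <;> aesop

lemma exch_injective {B : Finset S} {b b' c c' : S} (hb : b ∈ B) (hc : c ∉ B) (hb' : b' ∈ B)
    (hc' : c' ∉ B) (h : exch B b c = exch B b' c') : b = b' ∧ c = c' := by
  have h1 := sdiff_exch hb hc
  have h2 := exch_sdiff (b := b) hc
  rw [h, sdiff_exch hb' hc', singleton_inj] at h1
  rw [h, exch_sdiff hc', singleton_inj] at h2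
  exact ⟨h1.symm, h2.symm⟩

end Exchange

namespace IsMatroid

variable {S : Type} [DecidableEq S] {k : ℕ} {M : Finset (Finset S)} {A B D : Finset S}

lemma card_eq (hM : IsMatroid k M) (hB : B ∈ M) : B.card = k := hM.2.1 B hB

lemma card_inter_lt (hM : IsMatroid k M) (hA : A ∈ M) (hB : B ∈ M) (hne : A ≠ B) :
    (A ∩ B).card < k := by
  rw [← hM.card_eq hA]
  refine card_lt_card ⟨inter_subset_left, fun hAB => hne ?_⟩
  exact eq_of_subset_of_card_le (hAB.trans inter_subset_right)
    (by rw [hM.card_eq hA, hM.card_eq hB])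

lemma exists_mem_notMem_of_ne (hM : IsMatroid k M) (hB : B ∈ M) (hD : D ∈ M) (hne : B ≠ D) :
    ∃ b ∈ B, b ∉ D := by
  by_contra! h
  exact hne (eq_of_subset_of_card_le h (by rw [hM.card_eq hB, hM.card_eq hD]))

def toMatroid (hM : IsMatroid k M) : Matroid S :=
  Matroid.ofExistsFiniteIsBase Set.univ (fun X => ∃ B ∈ M, (B : Set S) = X)
    (let ⟨B, hB⟩ := hM.1; ⟨B, ⟨B, hB, rfl⟩, B.finite_toSet⟩)
    (by
      rintro _ _ ⟨I, hI, rfl⟩ ⟨J, hJ, rfl⟩ a ⟨haI, haJ⟩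
      obtain ⟨j, hj, hjM⟩ := hM.2.2 I hI J hJ (by rintro rfl; exact haJ haI) a
        (mem_sdiff.2 ⟨haI, haJ⟩)
      exact ⟨j, by simpa using hj, _, hjM, by simp⟩)
    (fun _ _ => Set.subset_univ _)

lemma toMatroid_isBase_coe (hM : IsMatroid k M) : hM.toMatroid.IsBase ↑B ↔ B ∈ M := by
  change (∃ B' ∈ M, (B' : Set S) = B) ↔ B ∈ M
  simp only [coe_inj, exists_eq_right]

lemma exists_symm_exch (hM : IsMatroid k M) (hB : B ∈ M) (hD : D ∈ M) {b : S} (hbB : b ∈ B)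
    (hbD : b ∉ D) : ∃ d ∈ D, d ∉ B ∧ exch B b d ∈ M ∧ exch D d b ∈ M := by
  set N := hM.toMatroid
  have hBN : N.IsBase ↑B := hM.toMatroid_isBase_coe.2 hB
  have hDN : N.IsBase ↑D := hM.toMatroid_isBase_coe.2 hD
  have hC := hDN.fundCircuit_isCircuit (Set.mem_univ b) (by exact_mod_cast hbD)
  have hK := N.fundCocircuit_isCocircuit (by exact_mod_cast hbB) hBN
  -- the fundamental circuit of `b` over `D` meets the fundamental cocircuit of `b` in `B` again
  obtain ⟨d, ⟨hdC, hdK⟩, hdb⟩ := (hC.isCocircuit_inter_nontrivial hK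
    ⟨b, N.mem_fundCircuit _ _, N.mem_fundCocircuit _ _⟩).exists_ne b
  have hdD : d ∈ D := by
    simpa [hdb] using N.fundCircuit_subset_insert b (↑D) hdC
  have hdB : d ∉ B := fun hdB => hdb (by
    simpa using (N.fundCocircuit_inter_eq (B := ↑B) (by exact_mod_cast hbB)).subset
      ⟨hdK, by exact_mod_cast hdB⟩)
  have hDd : N.Indep (insert b ↑D \ {d}) := (hDN.indep.mem_fundCircuit_iff
    (by rw [hDN.closure_eq]; trivial) (by exact_mod_cast hbD)).1 hdC
  have hBb : N.Indep (insert d ↑B \ {b}) := (hBN.indep.mem_fundCircuit_iff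
    (by rw [hBN.closure_eq]; trivial) (by exact_mod_cast hdB)).1
    (hBN.mem_fundCocircuit_iff_mem_fundCircuit.1 hdK)
  refine ⟨d, hdD, hdB, ?_, ?_⟩
  · rw [← hM.toMatroid_isBase_coe, coe_exch hdb.symm]
    exact hBN.exchange_isBase_of_indep' (by exact_mod_cast hbB) (by exact_mod_cast hdB) hBb
  · rw [← hM.toMatroid_isBase_coe, coe_exch hdb]
    exact hDN.exchange_isBase_of_indep' (by exact_mod_cast hdD) (by exact_mod_cast hbD) hDd

end IsMatroid

section ExposedFace

variable {E : Type*} [AddCommGroup E] [Module ℝ E] [TopologicalSpace E]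

lemma toExposed_convexHull (s : Finset E) (l : StrongDual ℝ E) :
    l.toExposed (convexHull ℝ ↑s) = convexHull ℝ ↑{p ∈ s | ∀ q ∈ s, l q ≤ l p} := by
  apply Set.Subset.antisymm
  · rintro x ⟨hx, hmax⟩
    obtain ⟨w, hw0, hw1, rfl⟩ := Finset.mem_convexHull'.1 hx
    set x := ∑ q ∈ s, w q • q
    have hle : ∀ p ∈ s, l p ≤ l x := fun p hp => hmax p (subset_convexHull ℝ _ hp)
    have hgap : ∑ p ∈ s, w p * (l x - l p) = 0 := by
      simp only [mul_sub, sum_sub_distrib, ← sum_mul, hw1, one_mul, x, map_sum, map_smul,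
        smul_eq_mul, sub_self]
    have hsupp : ∀ p ∈ s, w p ≠ 0 → ∀ q ∈ s, l q ≤ l p := by
      intro p hp hwp q hq
      have := (sum_eq_zero_iff_of_nonneg fun q hq =>
        mul_nonneg (hw0 q hq) (sub_nonneg.2 (hle q hq))).1 hgap p hp
      have : l p = l x := by
        rcases mul_eq_zero.1 this with h | h
        · exact absurd h hwp
        · linarith
      exact this ▸ hle q hq
    refine Finset.mem_convexHull'.2 ⟨w, fun p hp => hw0 p (mem_filter.1 hp).1, ?_, ?_⟩
    · rwa [sum_filter_of_ne fun p hp hwp => hsupp p hp hwp]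
    · exact sum_filter_of_ne fun p hp hwp => hsupp p hp fun h => hwp (by rw [h, zero_smul])
  · intro x hx
    obtain ⟨p, hp⟩ : ({p ∈ s | ∀ q ∈ s, l q ≤ l p} : Finset E).Nonempty := by
      by_contra h
      simp [not_nonempty_iff_eq_empty.1 h] at hx
    obtain ⟨hps, hpmax⟩ := mem_filter.1 hp
    have heq : ∀ y ∈ convexHull ℝ ↑{p ∈ s | ∀ q ∈ s, l q ≤ l p}, l y = l p :=
      convexHull_min (fun q hq => le_antisymm (hpmax q (mem_filter.1 hq).1)
        ((mem_filter.1 hq).2 p hps)) (convex_hyperplane l.isLinear _)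
    have hle : ∀ y ∈ convexHull ℝ ↑s, l y ≤ l p :=
      convexHull_min (fun q hq => hpmax q hq) (convex_halfSpace_le l.isLinear _)
    exact ⟨convexHull_mono (coe_subset.2 (filter_subset _ _)) hx,
      fun y hy => (hle y hy).trans (heq x hx).ge⟩

end ExposedFace

section Indicator

variable {S : Type} [DecidableEq S]

lemma delta_injective : Function.Injective (delta (S := S)) := by
  intro A B h
  ext i
  have := congrFun h i
  by_cases hA : i ∈ A <;> by_cases hB : i ∈ B <;> simp_all [delta]

def edgeDir (p : S × S) : S → ℝ := Pi.single p.2 1 - Pi.single p.1 1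

lemma delta_exch_sub_delta {B : Finset S} {b c : S} (hb : b ∈ B) (hc : c ∉ B) :
    delta (exch B b c) - delta B = Pi.single c 1 - Pi.single b 1 := by
  have hbc : b ≠ c := fun h => hc (h ▸ hb)
  funext i
  by_cases hic : i = c
  · subst hic; simp [delta, hc, hbc.symm]
  by_cases hib : i = b
  · subst hib; simp [delta, hb, hbc]
  simp [delta, hic, hib]

lemma eq_or_eq_of_delta_sub_mem_span {B D D' : Finset S}
    (h : delta D' - delta B ∈ Submodule.span ℝ {delta D - delta B}) : D' = B ∨ D' = D := by
  obtain ⟨t, ht⟩ := Submodule.mem_span_singleton.1 h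
  by_cases ht01 : t = 0 ∨ t = 1
  · rcases ht01 with rfl | rfl
    · exact .inl (delta_injective (sub_eq_zero.1 (by simpa using ht.symm)))
    · exact .inr (delta_injective (by simpa using ht.symm))
  · push Not at ht01
    have hDB : D = B := delta_injective <| funext fun i => by
      have := congrFun ht i
      simp only [Pi.smul_apply, Pi.sub_apply, smul_eq_mul, delta] at this ⊢
      split_ifs at this ⊢ <;> first | rfl | (exfalso; simp_all)
    subst hDB
    exact .inl (delta_injective (sub_eq_zero.1 (by simpa using ht.symm)))

end Indicator

section CoordSum

variable {S : Type}

def coordSum (A : Finset S) : StrongDual ℝ (S → ℝ) := ∑ i ∈ A, ContinuousLinearMap.proj i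

lemma coordSum_apply (A : Finset S) (x : S → ℝ) : coordSum A x = ∑ i ∈ A, x i := by
  simp [coordSum]

lemma coordSum_delta [DecidableEq S] (A D : Finset S) : coordSum A (delta D) = (A ∩ D).card := by
  simp [coordSum_apply, delta]

lemma coordSum_single [DecidableEq S] (A : Finset S) (i : S) :
    coordSum A (Pi.single i 1) = if i ∈ A then 1 else 0 := by
  simp [coordSum_apply, Pi.single_apply]

end CoordSum

lemma finrank_direction_segment {E : Type*} [AddCommGroup E] [Module ℝ E] {x y : E}
    (hxy : x ≠ y) : finrank ℝ (affineSpan ℝ (segment ℝ x y)).direction = 1 := by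
  rw [← convexHull_pair, affineSpan_convexHull, direction_affineSpan, vectorSpan_pair]
  exact finrank_span_singleton (vsub_ne_zero.2 hxy)

section MatroidPolytope

variable {S : Type} [DecidableEq S] {k : ℕ} {M : Finset (Finset S)} {A B : Finset S}

lemma delta_mem_matroidPolytope (hB : B ∈ M) : delta B ∈ matroidPolytope M :=
  subset_convexHull ℝ _ ⟨B, hB, rfl⟩

noncomputable def maximizers (M : Finset (Finset S)) (l : StrongDual ℝ (S → ℝ)) :
    Finset (Finset S) :=
  {D ∈ M | ∀ D' ∈ M, l (delta D') ≤ l (delta D)}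

lemma toExposed_matroidPolytope (l : StrongDual ℝ (S → ℝ)) :
    l.toExposed (matroidPolytope M) = convexHull ℝ (delta '' ↑(maximizers M l)) := by
  classical
  rw [matroidPolytope, ← coe_image, toExposed_convexHull, filter_image, coe_image]
  simp [maximizers]

lemma maximizers_coordSum_add (hM : IsMatroid k M) (hA : A ∈ M) (hB : B ∈ M)
    (hAB : k ≤ (A ∩ B).card + 1) : maximizers M (coordSum A + coordSum B) = {A, B} := by
  set f : Finset S → ℕ := fun D => (A ∩ D).card + (B ∩ D).card
  have hl : ∀ D, (coordSum A + coordSum B) (delta D) = f D := by simp [f, coordSum_delta]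
  have hfA : f A = f B := by
    simp only [f, inter_self, inter_comm B A, hM.card_eq hA, hM.card_eq hB, add_comm]
  have hlt : ∀ D ∈ M, D ≠ A → D ≠ B → f D < f A := by
    intro D hD hDA hDB
    have := hM.card_inter_lt hA hD (Ne.symm hDA)
    have := hM.card_inter_lt hB hD (Ne.symm hDB)
    simp only [f, inter_self, hM.card_eq hA, inter_comm B A]
    omega
  have hle : ∀ D ∈ M, f D ≤ f A := fun D hD => by
    by_cases hDA : D = A
    · rw [hDA]
    by_cases hDB : D = B
    · rw [hDB, hfA]
    exact (hlt D hD hDA hDB).le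
  ext D
  simp only [maximizers, mem_filter, hl, Nat.cast_le, mem_insert, mem_singleton]
  constructor
  · rintro ⟨hD, hmax⟩
    by_contra! h
    exact (hmax A hA).not_gt (hlt D hD h.1 h.2)
  · rintro (rfl | rfl)
    · exact ⟨hA, hle⟩
    · exact ⟨hB, hfA ▸ hle⟩

lemma delta_mem_extremePoints (hM : IsMatroid k M) (hA : A ∈ M) :
    delta A ∈ Set.extremePoints ℝ (matroidPolytope M) := by
  refine exposedPoints_subset_extremePoints (mem_exposedPoints_iff_exposed_singleton.2 ?_)
  refine fun _ => ⟨coordSum A + coordSum A, ?_⟩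
  rw [← ContinuousLinearMap.toExposed, toExposed_matroidPolytope,
    maximizers_coordSum_add hM hA hA (by rw [inter_self, hM.card_eq hA]; omega)]
  simp

end MatroidPolytope

section Edges

variable {S : Type} [DecidableEq S] {k : ℕ} {M : Finset (Finset S)} {A B : Finset S}

lemma isEdgeOf_segment (hM : IsMatroid k M) (hA : A ∈ M) (hB : B ∈ M) (hne : A ≠ B)
    (hAB : k ≤ (A ∩ B).card + 1) :
    IsEdgeOf (matroidPolytope M) (segment ℝ (delta A) (delta B)) := by
  refine ⟨fun _ => ⟨coordSum A + coordSum B, ?_⟩,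
    finrank_direction_segment (delta_injective.ne hne)⟩
  rw [← ContinuousLinearMap.toExposed, toExposed_matroidPolytope,
    maximizers_coordSum_add hM hA hB hAB, ← convexHull_pair]
  simp [Set.image_pair]

lemma isEdgeOf_segment_exch (hM : IsMatroid k M) (hB : B ∈ M) {b c : S} (hb : b ∈ B)
    (hc : c ∉ B) (hA : exch B b c ∈ M) :
    IsEdgeOf (matroidPolytope M) (segment ℝ (delta B) (delta (exch B b c))) := by
  refine isEdgeOf_segment hM hB hA (fun h => hc (h ▸ mem_exch.2 (.inl rfl))) ?_
  have : B.erase b ⊆ B ∩ exch B b c := fun i hi => by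
    simp only [mem_erase] at hi
    simp [hi.1, hi.2]
  have := card_le_card this
  rw [card_erase_of_mem hb, hM.card_eq hB] at this
  omega

lemma exists_maximizers_eq_pair {l : StrongDual ℝ (S → ℝ)}
    (hE : IsEdgeOf (matroidPolytope M) (l.toExposed (matroidPolytope M)))
    (hBT : B ∈ maximizers M l) : ∃ D, D ≠ B ∧ maximizers M l = {B, D} := by
  have hET := toExposed_matroidPolytope (M := M) l
  have hTE : ∀ D ∈ maximizers M l, delta D ∈ l.toExposed (matroidPolytope M) := fun D hD => by
    rw [hET]; exact subset_convexHull ℝ _ ⟨D, hD, rfl⟩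
  obtain ⟨D, hDT, hDB⟩ : ∃ D ∈ maximizers M l, D ≠ B := by
    by_contra! h
    have h1 := hE.2
    rw [hET, eq_singleton_iff_unique_mem.2 ⟨hBT, h⟩, coe_singleton, Set.image_singleton,
      convexHull_singleton, direction_affineSpan, vectorSpan_singleton, finrank_bot] at h1
    exact zero_ne_one h1
  have hdir : (affineSpan ℝ (l.toExposed (matroidPolytope M))).direction =
      Submodule.span ℝ {delta D - delta B} := by
    have : FiniteDimensional ℝ (affineSpan ℝ (l.toExposed (matroidPolytope M))).direction :=
      Module.finite_of_finrank_pos (hE.2 ▸ one_pos)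
    refine (Submodule.eq_of_le_of_finrank_le ?_ ?_).symm
    · rw [Submodule.span_le, Set.singleton_subset_iff]
      exact AffineSubspace.vsub_mem_direction (subset_affineSpan ℝ _ (hTE D hDT))
        (subset_affineSpan ℝ _ (hTE B hBT))
    · rw [finrank_span_singleton (sub_ne_zero.2 (delta_injective.ne hDB))]
      exact hE.2.le
  refine ⟨D, hDB, ?_⟩
  ext D'
  simp only [mem_insert, mem_singleton]
  refine ⟨fun hD' => eq_or_eq_of_delta_sub_mem_span ?_, by rintro (rfl | rfl) <;> assumption⟩
  rw [← hdir]
  exact AffineSubspace.vsub_mem_direction (subset_affineSpan ℝ _ (hTE D' hD'))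
    (subset_affineSpan ℝ _ (hTE B hBT))

lemma exists_exch_of_isEdgeOf (hM : IsMatroid k M) (hB : B ∈ M) {E : Set (S → ℝ)}
    (hE : IsEdgeOf (matroidPolytope M) E) (hBE : delta B ∈ E) :
    ∃ b ∈ B, ∃ c ∉ B, exch B b c ∈ M ∧
      E = segment ℝ (delta B) (delta (exch B b c)) := by
  obtain ⟨l, rfl⟩ := hE.1 ⟨_, hBE⟩
  have hmax : ∀ D ∈ maximizers M l, ∀ D' ∈ M, l (delta D') ≤ l (delta D) :=
    fun D hD => (mem_filter.1 hD).2
  have hBT : B ∈ maximizers M l :=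
    mem_filter.2 ⟨hB, fun D' hD' => hBE.2 _ (delta_mem_matroidPolytope hD')⟩
  obtain ⟨D, hDB, hT⟩ := exists_maximizers_eq_pair hE hBT
  have hDT : D ∈ maximizers M l := hT ▸ mem_insert_of_mem (mem_singleton_self D)
  have hDM : D ∈ M := (mem_filter.1 hDT).1
  obtain ⟨b, hbB, hbD⟩ := hM.exists_mem_notMem_of_ne hB hDM hDB.symm
  obtain ⟨c, hcD, hcB, hBc, hDb⟩ := hM.exists_symm_exch hB hDM hbB hbD
  -- `δ B + δ D = δ (exch B b c) + δ (exch D c b)`, so both exchanged bases maximise `l` too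
  have hsum : l (delta (exch B b c)) + l (delta (exch D c b)) = l (delta B) + l (delta D) := by
    rw [← map_add, ← map_add]
    congr 1
    linear_combination delta_exch_sub_delta hbB hcB + delta_exch_sub_delta hcD hbD
  have hcT : exch B b c ∈ maximizers M l := by
    refine mem_filter.2 ⟨hBc, fun D' hD' => ?_⟩
    linarith [hmax B hBT D' hD', hmax B hBT _ hDb, hmax D hDT B hB]
  rw [hT, mem_insert, mem_singleton] at hcT
  obtain h | h := hcT
  · exact absurd (h ▸ mem_exch.2 (.inl rfl)) hcB
  · refine ⟨b, hbB, c, hcB, hBc, ?_⟩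
    rw [← ContinuousLinearMap.toExposed, toExposed_matroidPolytope, hT, ← h, coe_pair,
      Set.image_pair, convexHull_pair]

end Edges

section ExchangePairs

variable {S : Type} [Fintype S] [DecidableEq S] {k : ℕ} {M : Finset (Finset S)} {B : Finset S}

def exchangePairs (M : Finset (Finset S)) (B : Finset S) : Finset (S × S) :=
  {p ∈ B ×ˢ Bᶜ | exch B p.1 p.2 ∈ M}

lemma mem_exchangePairs {p : S × S} :
    p ∈ exchangePairs M B ↔ p.1 ∈ B ∧ p.2 ∉ B ∧ exch B p.1 p.2 ∈ M := by
  simp [exchangePairs, and_assoc]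

@[simp] lemma mk_mem_exchangePairs {b c : S} :
    (b, c) ∈ exchangePairs M B ↔ b ∈ B ∧ c ∉ B ∧ exch B b c ∈ M :=
  mem_exchangePairs

lemma ncard_edges_eq_card_exchangePairs (hM : IsMatroid k M) (hB : B ∈ M) :
    {E | IsEdgeOf (matroidPolytope M) E ∧ delta B ∈ E}.ncard = (exchangePairs M B).card := by
  have hset : {E | IsEdgeOf (matroidPolytope M) E ∧ delta B ∈ E} =
      (fun p : S × S => segment ℝ (delta B) (delta (exch B p.1 p.2))) ''
        ↑(exchangePairs M B) := by
    ext E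
    constructor
    · rintro ⟨hE, hBE⟩
      obtain ⟨b, hb, c, hc, hA, rfl⟩ := exists_exch_of_isEdgeOf hM hB hE hBE
      exact ⟨(b, c), mk_mem_exchangePairs.2 ⟨hb, hc, hA⟩, rfl⟩
    · rintro ⟨⟨b, c⟩, hp, rfl⟩
      obtain ⟨hb, hc, hA⟩ := mk_mem_exchangePairs.1 hp
      exact ⟨isEdgeOf_segment_exch hM hB hb hc hA, left_mem_segment ℝ _ _⟩
  rw [hset, Set.InjOn.ncard_image, Set.ncard_coe_finset]
  rintro ⟨b, c⟩ hp ⟨b', c'⟩ hp' (heq : segment ℝ _ _ = segment ℝ _ _)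
  obtain ⟨hb, hc, hA⟩ := mk_mem_exchangePairs.1 hp
  obtain ⟨hb', hc', hA'⟩ := mk_mem_exchangePairs.1 hp'
  have hmem : delta (exch B b c) ∈ segment ℝ (delta B) (delta (exch B b' c')) :=
    heq ▸ right_mem_segment ℝ _ _
  obtain h | h := (mem_extremePoints_iff_forall_segment.1 (delta_mem_extremePoints hM hA)).2 _
    (delta_mem_matroidPolytope hB) _ (delta_mem_matroidPolytope hA') hmem
  · exact absurd (delta_injective h ▸ mem_exch.2 (.inl rfl)) hc
  · obtain ⟨rfl, rfl⟩ := exch_injective hb' hc' hb hc (delta_injective h)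
    rfl

end ExchangePairs

section EdgeDirections

variable {S : Type} [Fintype S] [DecidableEq S] {k : ℕ} {M : Finset (Finset S)} {B : Finset S}

lemma delta_sub_mem_span_edgeDir (hM : IsMatroid k M) (hB : B ∈ M) {D : Finset S} (hD : D ∈ M) :
    delta D - delta B ∈ Submodule.span ℝ (edgeDir '' (exchangePairs M B : Set (S × S))) := by
  induction hN : (D \ B).card using Nat.strong_induction_on generalizing D with
  | _ N ih =>
  by_cases hDB : D = B
  · simp [hDB]
  obtain ⟨b, hbB, hbD⟩ := hM.exists_mem_notMem_of_ne hB hD (Ne.symm hDB)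
  obtain ⟨d, hdD, hdB, hBd, hDb⟩ := hM.exists_symm_exch hB hD hbB hbD
  have hstep : delta D - delta B = edgeDir (b, d) + (delta (exch D d b) - delta B) := by
    unfold edgeDir
    linear_combination -(delta_exch_sub_delta hdD hbD)
  have hcloser : (exch D d b \ B).card < N := by
    refine hN ▸ card_lt_card ((ssubset_iff_of_subset fun i hi => ?_).2 ⟨d, ?_, ?_⟩)
    · simp only [mem_sdiff, mem_exch] at hi ⊢
      rcases hi with ⟨rfl | ⟨-, hiD⟩, hiB⟩
      exacts [absurd hbB hiB, ⟨hiD, hiB⟩]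
    · exact mem_sdiff.2 ⟨hdD, hdB⟩
    · simp only [mem_sdiff, mem_exch, not_and, not_not]
      rintro (rfl | ⟨h, -⟩)
      exacts [hbB, absurd rfl h]
  rw [hstep]
  exact add_mem
    (Submodule.subset_span ⟨(b, d), mk_mem_exchangePairs.2 ⟨hbB, hdB, hBd⟩, rfl⟩)
    (ih _ hcloser hDb rfl)

lemma vectorSpan_eq_span_edgeDir (hM : IsMatroid k M) (hB : B ∈ M) :
    vectorSpan ℝ (delta '' (M : Set (Finset S))) =
      Submodule.span ℝ (edgeDir '' (exchangePairs M B : Set (S × S))) := by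
  apply le_antisymm
  · rw [vectorSpan_eq_span_vsub_set_right ℝ (Set.mem_image_of_mem delta hB), Submodule.span_le]
    rintro _ ⟨_, ⟨D, hD, rfl⟩, rfl⟩
    exact delta_sub_mem_span_edgeDir hM hB hD
  · rw [Submodule.span_le]
    rintro _ ⟨⟨b, c⟩, hp, rfl⟩
    obtain ⟨hb, hc, hA⟩ := mk_mem_exchangePairs.1 hp
    rw [edgeDir, ← delta_exch_sub_delta hb hc]
    exact vsub_mem_vectorSpan ℝ ⟨_, hA, rfl⟩ ⟨_, hB, rfl⟩

omit [Fintype S] in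
lemma polyDim_matroidPolytope :
    polyDim (matroidPolytope M) = finrank ℝ (vectorSpan ℝ (delta '' (M : Set (Finset S)))) := by
  rw [polyDim, matroidPolytope, affineSpan_convexHull, direction_affineSpan]

end EdgeDirections

section Dimension

variable {S : Type} [Fintype S] [DecidableEq S] {k : ℕ} {M : Finset (Finset S)} {B : Finset S}

lemma exists_exchangePair_crossing (hM : IsMatroid k M) (hB : B ∈ M)
    (hdim : polyDim (matroidPolytope M) = Fintype.card S - 1) {C : Finset S} {i j : S}
    (hi : i ∈ C) (hj : j ∉ C) : ∃ p ∈ exchangePairs M B, (p.1 ∈ C ↔ p.2 ∉ C) := by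
  by_contra! hno
  set K := LinearMap.ker (coordSum (univ : Finset S) : (S → ℝ) →ₗ[ℝ] ℝ)
  -- `delta '' M` lies in a hyperplane `∑ xᵢ = k`, whose direction `K` has the same dimension
  have hVle : vectorSpan ℝ (delta '' (M : Set (Finset S))) ≤ K := by
    rw [vectorSpan_def, Submodule.span_le]
    rintro _ ⟨_, ⟨D, hD, rfl⟩, _, ⟨D', hD', rfl⟩, rfl⟩
    simp [K, coordSum_delta, hM.card_eq hD, hM.card_eq hD']
  have hKtop : K ≠ ⊤ := fun h => by
    have : Pi.single i 1 ∈ K := h ▸ Submodule.mem_top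
    simp [K, coordSum_single] at this
  have hVK : vectorSpan ℝ (delta '' (M : Set (Finset S))) = K := by
    refine Submodule.eq_of_le_of_finrank_le hVle ?_
    have := Submodule.finrank_lt hKtop
    rw [← polyDim_matroidPolytope, hdim]
    rw [Module.finrank_fintype_fun_eq_card] at this
    omega
  have hspan : Submodule.span ℝ (edgeDir '' (exchangePairs M B : Set (S × S))) ≤
      LinearMap.ker (coordSum C : (S → ℝ) →ₗ[ℝ] ℝ) := by
    rw [Submodule.span_le]
    rintro _ ⟨p, hp, rfl⟩
    have := hno p hp
    by_cases h1 : p.1 ∈ C <;> by_cases h2 : p.2 ∈ C <;> simp_all [edgeDir, coordSum_single]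
  have : edgeDir (j, i) ∈ K := by simp [K, edgeDir, coordSum_single]
  rw [← hVK, vectorSpan_eq_span_edgeDir hM hB] at this
  simpa [edgeDir, coordSum_single, hi, hj] using hspan this

lemma linearIndepOn_edgeDir (hM : IsMatroid k M) (hB : B ∈ M)
    (hsimple : (exchangePairs M B).card = polyDim (matroidPolytope M)) :
    LinearIndepOn ℝ edgeDir (exchangePairs M B : Set (S × S)) := by
  rw [polyDim_matroidPolytope, vectorSpan_eq_span_edgeDir hM hB] at hsimple
  refine linearIndependent_iff_card_eq_finrank_span.2 ?_
  rw [Set.finrank, ← Set.image_eq_range]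
  exact (Fintype.card_coe _).trans hsimple

end Dimension

section ExchangeGraph

variable {S : Type} [DecidableEq S]

def NoFourCycle (P : Finset (S × S)) : Prop :=
  ∀ ⦃b b' c c' : S⦄, b ≠ b' → c ≠ c' →
    (b, c) ∈ P → (b', c) ∈ P → (b, c') ∈ P → (b', c') ∉ P

lemma noFourCycle_of_linearIndepOn_edgeDir {P : Finset (S × S)}
    (hP : LinearIndepOn ℝ edgeDir (P : Set (S × S))) : NoFourCycle P := by
  intro b b' c c' hb hc h1 h2 h3 h4
  have hmem : ∀ q ∈ P, q ≠ (b, c) →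
      edgeDir q ∈ Submodule.span ℝ (edgeDir '' ((P : Set (S × S)) \ {(b, c)})) :=
    fun q hq hne => Submodule.subset_span ⟨q, ⟨hq, hne⟩, rfl⟩
  have hcycle : edgeDir (b, c) = edgeDir (b', c) + edgeDir (b, c') - edgeDir (b', c') := by
    simp only [edgeDir]
    abel
  refine hP.notMem_span (mem_coe.2 h1) ?_
  rw [hcycle]
  exact sub_mem (add_mem (hmem _ h2 (by simp [hb.symm])) (hmem _ h3 (by simp [hc.symm])))
    (hmem _ h4 (by simp [hb.symm]))

lemma exists_internal_edge {B : Finset S} {P : Finset (S × S)}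
    (hP : ∀ p ∈ P, p.1 ∈ B ∧ p.2 ∉ B)
    (hcross : ∀ C : Finset S, ∀ i ∈ C, ∀ j ∉ C, ∃ p ∈ P, (p.1 ∈ C ↔ p.2 ∉ C))
    (hB : 2 ≤ B.card) (hPB : B.card < P.card) :
    ∃ b c, (b, c) ∈ P ∧ (∃ b' ≠ b, (b', c) ∈ P) ∧ ∃ c' ≠ c, (b, c') ∈ P := by
  obtain ⟨b, hbB, hb⟩ := exists_lt_card_fiber_of_mul_lt_card_of_maps_to (n := 1)
    (fun p hp => (hP p hp).1) (by simpa using hPB)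
  have hother : ∀ c, ∃ c' ≠ c, (b, c') ∈ P := fun c => by
    obtain ⟨p, hp, hpc⟩ := exists_mem_ne hb (b, c)
    obtain ⟨hpP, rfl⟩ := mem_filter.1 hp
    exact ⟨p.2, fun h => hpc (Prod.ext rfl h), hpP⟩
  -- some pair crosses the cut formed by `b` and its neighbours
  obtain ⟨c, hc, b', hb', hb'c⟩ : ∃ c, (b, c) ∈ P ∧ ∃ b' ≠ b, (b', c) ∈ P := by
    set C := insert b ({p ∈ P | p.1 = b}.image Prod.snd)
    have hC : ∀ x, x ∈ C ↔ x = b ∨ (b, x) ∈ P := by simp [C]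
    obtain ⟨b₀, hb₀B, hb₀⟩ := exists_mem_ne hB b
    obtain ⟨⟨x, y⟩, hxy, hcr⟩ := hcross C b (mem_insert_self _ _) b₀
      (by simp only [hC, not_or]; exact ⟨hb₀, fun h => (hP _ h).2 hb₀B⟩)
    obtain ⟨hxB, hyB⟩ := hP _ hxy
    have hxC : x ∈ C ↔ x = b := by rw [hC]; exact or_iff_left fun h => (hP _ h).2 hxB
    have hyC : y ∈ C ↔ (b, y) ∈ P := by rw [hC]; exact or_iff_right fun h => hyB (h ▸ hbB)
    rw [hxC, hyC] at hcr
    by_cases hxb : x = b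
    · exact absurd (hxb ▸ hxy) (hcr.1 hxb)
    · exact ⟨y, not_not.1 (mt hcr.2 hxb), x, hxb, hxy⟩
  obtain ⟨c', hc', hbc'⟩ := hother c
  exact ⟨b, c, hc, ⟨b', hb', hb'c⟩, c', hc', hbc'⟩

end ExchangeGraph

section NeighbourCount

variable {S : Type} [Fintype S] [DecidableEq S] {k : ℕ} {M : Finset (Finset S)} {B : Finset S}
  {b c : S}

lemma exch_exch_mem (hM : IsMatroid k M) (hsq : NoFourCycle (exchangePairs M B))
    (hbc : (b, c) ∈ exchangePairs M B) {x y : S} (hxy : (x, y) ∈ exchangePairs M B)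
    (hxb : x ≠ b) (hyc : y ≠ c) : exch (exch B b c) x y ∈ M := by
  obtain ⟨hb, hc, hA⟩ := mk_mem_exchangePairs.1 hbc
  obtain ⟨hx, hy, hD⟩ := mk_mem_exchangePairs.1 hxy
  obtain ⟨j, hjD, hjA, hAj, hDj⟩ := hM.exists_symm_exch hA hD (b := x)
    (by simp [hxb, hx]) (by simp; rintro rfl; exact hy hx)
  have hj : j = y ∨ b = j := by simp only [mem_exch] at hjD hjA; grind
  rcases hj with rfl | rfl
  · exact hAj
  -- otherwise `(x, c)` and `(b, y)` are exchange pairs of `B`, closing a 4-cycle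
  have hxc : exch (exch B b c) x b = exch B x c := by ext i; simp only [mem_exch]; grind
  have hby : exch (exch B x y) b x = exch B b y := by ext i; simp only [mem_exch]; grind
  rw [hxc] at hAj
  rw [hby] at hDj
  exact absurd hxy (hsq (Ne.symm hxb) (Ne.symm hyc) hbc (mk_mem_exchangePairs.2 ⟨hx, hc, hAj⟩)
    (mk_mem_exchangePairs.2 ⟨hb, hy, hDj⟩))

lemma prodMap_swap_mem_exchangePairs_exch (hM : IsMatroid k M) (hB : B ∈ M)
    (hsq : NoFourCycle (exchangePairs M B)) (hbc : (b, c) ∈ exchangePairs M B) {p : S × S}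
    (hp : p ∈ exchangePairs M B) :
    Prod.map (Equiv.swap b c) (Equiv.swap b c) p ∈ exchangePairs M (exch B b c) := by
  obtain ⟨x, y⟩ := p
  obtain ⟨hb, hc, hA⟩ := mk_mem_exchangePairs.1 hbc
  obtain ⟨hx, hy, hD⟩ := mk_mem_exchangePairs.1 hp
  have hxc : x ≠ c := fun h => hc (h ▸ hx)
  have hyb : y ≠ b := fun h => hy (h ▸ hb)
  simp only [Prod.map, mk_mem_exchangePairs]
  rcases eq_or_ne x b with rfl | hxb <;> rcases eq_or_ne y c with rfl | hyc
  · rw [Equiv.swap_apply_left, Equiv.swap_apply_right]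
    refine ⟨by simp, by simpa using hxc, ?_⟩
    convert hB using 1
    ext i; simp only [mem_exch]; grind
  · rw [Equiv.swap_apply_left, Equiv.swap_apply_of_ne_of_ne hyb hyc]
    refine ⟨by simp, by simp [hyc, hy], ?_⟩
    convert hD using 1
    ext i; simp only [mem_exch]; grind
  · rw [Equiv.swap_apply_right, Equiv.swap_apply_of_ne_of_ne hxb hxc]
    refine ⟨by simp [hxb, hx], by simpa using hyb.symm, ?_⟩
    convert hD using 1
    ext i; simp only [mem_exch]; grind
  · rw [Equiv.swap_apply_of_ne_of_ne hxb hxc, Equiv.swap_apply_of_ne_of_ne hyb hyc]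
    exact ⟨by simp [hxb, hx], by simp [hyc, hy], exch_exch_mem hM hsq hbc hp hxb hyc⟩

lemma mk_mem_exchangePairs_exch (hM : IsMatroid k M) (hsq : NoFourCycle (exchangePairs M B))
    (hbc : (b, c) ∈ exchangePairs M B) {b' c' : S} (hb' : b' ≠ b)
    (hb'c : (b', c) ∈ exchangePairs M B) (hc' : c' ≠ c) (hbc' : (b, c') ∈ exchangePairs M B) :
    (b', c') ∈ exchangePairs M (exch B b c) := by
  obtain ⟨hb, hc, -⟩ := mk_mem_exchangePairs.1 hbc
  obtain ⟨hb'B, -, hX⟩ := mk_mem_exchangePairs.1 hb'c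
  obtain ⟨-, hc'B, hY⟩ := mk_mem_exchangePairs.1 hbc'
  have hnot := hsq hb'.symm hc'.symm hbc hb'c hbc'
  obtain ⟨j, hjX, hjY, hYj, -⟩ := hM.exists_symm_exch hY hX (b := b')
    (by simp [hb', hb'B]) (by simp; rintro rfl; exact hc hb'B)
  have hj : j = c ∨ j = b := by simp only [mem_exch] at hjX hjY; grind
  refine mk_mem_exchangePairs.2 ⟨by simp [hb', hb'B], by simp [hc', hc'B], ?_⟩
  rcases hj with rfl | rfl
  · convert hYj using 1
    ext i; simp only [mem_exch]; grind
  · refine absurd (mk_mem_exchangePairs.2 ⟨hb'B, hc'B, ?_⟩) hnot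
    convert hYj using 1
    ext i; simp only [mem_exch]; grind

lemma card_exchangePairs_lt_exch (hM : IsMatroid k M) (hB : B ∈ M)
    (hsq : NoFourCycle (exchangePairs M B)) (hbc : (b, c) ∈ exchangePairs M B) {b' c' : S}
    (hb' : b' ≠ b) (hb'c : (b', c) ∈ exchangePairs M B) (hc' : c' ≠ c)
    (hbc' : (b, c') ∈ exchangePairs M B) :
    (exchangePairs M B).card < (exchangePairs M (exch B b c)).card := by
  set Ψ := (Equiv.swap b c).prodCongr (Equiv.swap b c)
  have hnew : (b', c') ∉ (exchangePairs M B).map Ψ.toEmbedding := by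
    obtain ⟨hb'B, -, -⟩ := mk_mem_exchangePairs.1 hb'c
    obtain ⟨hb, hc, -⟩ := mk_mem_exchangePairs.1 hbc
    obtain ⟨-, hc'B, -⟩ := mk_mem_exchangePairs.1 hbc'
    rw [mem_map_equiv]
    have hb'ne : b' ≠ c := fun h => hc (h ▸ hb'B)
    have hc'ne : c' ≠ b := fun h => hc'B (h ▸ hb)
    simp only [Ψ, Equiv.prodCongr_symm, Equiv.symm_swap, Equiv.prodCongr_apply, Prod.map,
      Equiv.swap_apply_of_ne_of_ne hb' hb'ne, Equiv.swap_apply_of_ne_of_ne hc'ne hc']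
    exact hsq hb'.symm hc'.symm hbc hb'c hbc'
  calc (exchangePairs M B).card
      = ((exchangePairs M B).map Ψ.toEmbedding).card := (card_map _).symm
    _ < (insert (b', c') ((exchangePairs M B).map Ψ.toEmbedding)).card := by
      rw [card_insert_of_notMem hnew]; omega
    _ ≤ (exchangePairs M (exch B b c)).card := by
      refine card_le_card (insert_subset (mk_mem_exchangePairs_exch hM hsq hbc hb' hb'c hc' hbc')
        fun q hq => ?_)
      obtain ⟨p, hp, rfl⟩ := mem_map.1 hq
      exact prodMap_swap_mem_exchangePairs_exch hM hB hsq hbc hp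

end NeighbourCount

/-- **Theorem 1.4.** Let `k ≥ 2` and `n − k ≥ 2`, and let `Δ` be the matroid polytope of a
matroid of rank `k` on `[n]` with `dim Δ = n − 1`. If `v` is a simple vertex of `Δ`, then there
is a vertex of `Δ` joined to `v` by an edge of `Δ` which is not a simple vertex of `Δ`. -/
theorem simple_vertex_has_nonsimple_neighbor
    (n k : ℕ) (hk : 2 ≤ k) (hnk : 2 ≤ n - k)
    (M : Finset (Finset (Fin n))) (hM : IsMatroid k M)
    (hdim : polyDim (matroidPolytope M) = n - 1)
    (v : Fin n → ℝ) (hv : v ∈ Set.extremePoints ℝ (matroidPolytope M))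
    (hvs : IsSimpleAt (matroidPolytope M) v) :
    ∃ w ∈ Set.extremePoints ℝ (matroidPolytope M),
      IsEdgeOf (matroidPolytope M) (segment ℝ v w) ∧
      ¬ IsSimpleAt (matroidPolytope M) w := by
  obtain ⟨B, hB, rfl⟩ := extremePoints_convexHull_subset hv
  have hsimple : (exchangePairs M B).card = polyDim (matroidPolytope M) := by
    rw [← ncard_edges_eq_card_exchangePairs hM hB]
    exact hvs
  have hsq := noFourCycle_of_linearIndepOn_edgeDir (linearIndepOn_edgeDir hM hB hsimple)
  obtain ⟨b, c, hbc, ⟨b', hb', hb'c⟩, c', hc', hbc'⟩ := exists_internal_edge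
    (fun p hp => ⟨(mem_exchangePairs.1 hp).1, (mem_exchangePairs.1 hp).2.1⟩)
    (fun C i hi j hj => exists_exchangePair_crossing hM hB (by rwa [Fintype.card_fin]) hi hj)
    (hM.card_eq hB ▸ hk) (by rw [hM.card_eq hB, hsimple, hdim]; omega)
  obtain ⟨hb, hc, hA⟩ := mk_mem_exchangePairs.1 hbc
  refine ⟨delta (exch B b c), delta_mem_extremePoints hM hA,
    isEdgeOf_segment_exch hM hB hb hc hA, fun hAs => ?_⟩
  have := card_exchangePairs_lt_exch hM hB hsq hbc hb' hb'c hc' hbc'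
  rw [IsSimpleAt, ncard_edges_eq_card_exchangePairs hM hA] at hAs
  omega
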